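/- arXiv:2506.06644 — 2 statements merged into one kernel-verified Lean document; each statement's English description precedes it below -/
import Mathlib

section
/- For any δ > 0, the scalar function x ↦ huber(max(x - θ, 0); δ)/δ, where huber(t; δ) = t²/2 for |t| < δ and δ(|t| - δ/2) otherwise, is continuously differentiable jointly in (x, θ) ∈ ℝ². -/
/-- The Huber function. -/
noncomputable def huber (δ t : ℝ) : ℝ :=
  if |t| < δ then t^2 / 2 else δ * (|t| - δ/2)

/-! Composed with the soft threshold, the Huber function is a difference of two shifted copies of
`u ↦ max u 0 ^ 2 / 2`, the antiderivative of the continuous function `u ↦ max u 0`; hence it is `C¹`. -/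

open Filter Topology

lemma hasDerivAt_max_zero_sq (u : ℝ) :
    HasDerivAt (fun v : ℝ => max v 0 ^ 2) (2 * max u 0) u := by
  have hcont : Continuous fun v : ℝ => max v 0 := continuous_id.max continuous_const
  refine hasDerivAt_of_hasDerivAt_of_ne' (f := fun v : ℝ => max v 0 ^ 2) (x := 0)
    (fun y hy => ?_) (hcont.pow 2).continuousAt (continuous_const.mul hcont).continuousAt u
  rcases hy.lt_or_gt with hneg | hpos
  · have hzero : (fun v : ℝ => max v 0 ^ 2) =ᶠ[𝓝 y] fun _ => 0 := by
      filter_upwards [Iio_mem_nhds hneg] with v (hv : v < 0)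
      simp [max_eq_right hv.le]
    simpa [max_eq_right hneg.le] using (hasDerivAt_const y (0 : ℝ)).congr_of_eventuallyEq hzero
  · have hsq : (fun v : ℝ => max v 0 ^ 2) =ᶠ[𝓝 y] fun v => v ^ 2 := by
      filter_upwards [Ioi_mem_nhds hpos] with v (hv : 0 < v)
      rw [max_eq_left hv.le]
    simpa [max_eq_left hpos.le] using (hasDerivAt_pow 2 y).congr_of_eventuallyEq hsq

lemma contDiff_max_zero_sq : ContDiff ℝ 1 fun v : ℝ => max v 0 ^ 2 := by
  rw [contDiff_one_iff_deriv]
  refine ⟨fun u => (hasDerivAt_max_zero_sq u).differentiableAt, ?_⟩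
  rw [funext fun u => (hasDerivAt_max_zero_sq u).deriv]
  exact continuous_const.mul (continuous_id.max continuous_const)

lemma huber_max_zero {δ : ℝ} (hδ : 0 ≤ δ) (u : ℝ) :
    huber δ (max u 0) = (max u 0 ^ 2 - max (u - δ) 0 ^ 2) / 2 := by
  rw [huber, abs_of_nonneg (le_max_right u 0)]
  split_ifs with h
  · have hu : u - δ ≤ 0 := by linarith [le_max_left u 0]
    simp [max_eq_right hu]
  · rcases le_total u 0 with hu | hu
    · have hδ0 : δ = 0 := by rw [max_eq_right hu] at h; linarith
      simp [hδ0]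
    · rw [max_eq_left hu] at h ⊢
      rw [max_eq_left (by linarith)]
      ring

/-- For any `δ > 0`, the map `(x, θ) ↦ huber(max(x - θ, 0); δ)/δ` is continuously
differentiable jointly in `(x, θ)`. -/
theorem huber_softThreshold_contDiff (δ : ℝ) (hδ : 0 < δ) :
    ContDiff ℝ 1 (fun p : ℝ × ℝ => huber δ (max (p.1 - p.2) 0) / δ) := by
  simp_rw [huber_max_zero hδ.le]
  have hdiff : ContDiff ℝ 1 fun p : ℝ × ℝ => p.1 - p.2 := contDiff_fst.sub contDiff_snd
  exact (((contDiff_max_zero_sq.comp hdiff).sub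
    (contDiff_max_zero_sq.comp (hdiff.sub contDiff_const))).div_const 2).div_const δ
end

section
/- Let x₁, ..., x_d be i.i.d. N(μ, σ²) with d ≥ max{2, log(6/δ)} and δ ∈ (0,1), and let s be the sample standard deviation. With probability at least 1 - δ/3, |s - σ| ≤ 8σ·√(log(6/δ)/d). -/
/-!
Centre the sample at the true mean, `Zᵢ = Xᵢ - μ`, so that `Zᵢ ~ N(0, v)` and
`∑ (Xᵢ - X̄)² = W - T² / d` with `W = ∑ Zᵢ²` and `T = ∑ Zᵢ`. Since
`E exp(t Zᵢ²) = (1 - 2tv)^(-1/2)`, Chernoff's bound controls both tails of the chi-squared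
variable `W / v` at scale `d u = √(d L)`, where `L = log (6/δ)` and `u = √(L/d)`, and `T` is
sub-Gaussian with variance proxy `d v`. Each of the four tail events costs at most
`exp (-(L + 1)) ≤ δ/12`. Off them, `(d - 1) s² / v` lies between `(d - 1)(1 - 8u)²` and
`(d - 1)(1 + 8u)²`, and taking square roots gives `|s - √v| ≤ 8 √v u`.
-/

open ProbabilityTheory MeasureTheory Finset Real
open scoped NNReal

lemma inv_sqrt_eq_exp_neg_log_div_two {x : ℝ} (hx : 0 < x) : (√x)⁻¹ = exp (-(log x / 2)) := by
  rw [exp_neg, ← log_sqrt hx.le, exp_log (sqrt_pos.2 hx)]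

lemma inv_sqrt_one_sub_two_mul_le_exp {s : ℝ} (hs : s ≤ 1 / 4) :
    (√(1 - 2 * s))⁻¹ ≤ exp (s + 4 * s ^ 2) := by
  have hpos : 0 < 1 - 2 * s := by linarith
  rw [inv_sqrt_eq_exp_neg_log_div_two hpos, exp_le_exp]
  have hlog := one_sub_inv_le_log_of_pos hpos
  have : (1 - 2 * s)⁻¹ ≤ 1 + 2 * s + 8 * s ^ 2 := by
    rw [inv_eq_one_div, div_le_iff₀ hpos]
    nlinarith
  linarith

lemma inv_sqrt_one_add_two_mul_le_exp {s : ℝ} (hs : 0 ≤ s) :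
    (√(1 + 2 * s))⁻¹ ≤ exp (-s + 2 * s ^ 2) := by
  have hpos : 0 < 1 + 2 * s := by linarith
  rw [inv_sqrt_eq_exp_neg_log_div_two hpos, exp_le_exp]
  have hlog := one_sub_inv_le_log_of_pos hpos
  have : (1 + 2 * s)⁻¹ ≤ 1 - 2 * s + 4 * s ^ 2 := by
    rw [inv_eq_one_div, div_le_iff₀ hpos]
    nlinarith
  linarith

lemma four_thirds_le_log_six_div {δ : ℝ} (hδ0 : 0 < δ) (hδ1 : δ ≤ 1) : 4 / 3 ≤ log (6 / δ) := by
  have h4 : log 4 ≤ log (6 / δ) := log_le_log (by norm_num) (by rw [le_div_iff₀ hδ0]; linarith)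
  have : log 4 = 2 * log 2 := by rw [show (4 : ℝ) = 2 ^ 2 by norm_num, log_pow]; norm_num
  linarith [log_two_gt_d9]

lemma exp_neg_log_six_div_add_one_le {δ : ℝ} (hδ : 0 < δ) : exp (-(log (6 / δ) + 1)) ≤ δ / 12 := by
  have he : 2 ≤ exp 1 := by linarith [add_one_le_exp (1 : ℝ)]
  rw [neg_add, exp_add, exp_neg, exp_log (by positivity), inv_div, exp_neg,
    mul_inv_le_iff₀ (by positivity)]
  nlinarith

lemma sum_sub_mean_sq_eq {ι : Type*} [Fintype ι] (x : ι → ℝ) (μ : ℝ) :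
    ∑ i, (x i - (∑ j, x j) / Fintype.card ι) ^ 2
      = ∑ i, (x i - μ) ^ 2 - (∑ i, (x i - μ)) ^ 2 / Fintype.card ι := by
  rcases isEmpty_or_nonempty ι with hι | hι
  · simp
  have hn : (Fintype.card ι : ℝ) ≠ 0 := by positivity
  simp only [sub_sq, sum_add_distrib, sum_sub_distrib, ← sum_mul,
    ← mul_sum, sum_const, card_univ, nsmul_eq_mul, mul_pow]
  field_simp
  ring

lemma abs_sqrt_sub_sqrt_le {a b ε : ℝ} (hε : 0 ≤ ε) (hup : a ≤ b * (1 + ε) ^ 2)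
    (hlow : ε < 1 → b * (1 - ε) ^ 2 ≤ a) : |√a - √b| ≤ √b * ε := by
  have hsqrt_up : √a ≤ √b * (1 + ε) := by
    calc √a ≤ √(b * (1 + ε) ^ 2) := sqrt_le_sqrt hup
      _ = √b * (1 + ε) := by rw [sqrt_mul' _ (by positivity), sqrt_sq (by linarith)]
  have hsqrt_low : √b * (1 - ε) ≤ √a := by
    rcases lt_or_ge ε 1 with h | h
    · calc √b * (1 - ε) = √(b * (1 - ε) ^ 2) := by
            rw [sqrt_mul' _ (by positivity), sqrt_sq (by linarith)]
        _ ≤ √a := sqrt_le_sqrt (hlow h)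
    · nlinarith [sqrt_nonneg a, sqrt_nonneg b]
  rw [abs_le]
  constructor <;> linarith

lemma abs_sqrt_sample_var_sub_sqrt_le {n v u L W T : ℝ} (hn : 2 ≤ n) (hv : 0 ≤ v) (hu : 0 < u)
    (hL : 1 ≤ L) (hnu : n * u ^ 2 = L) (hW_up : W < v * (n + 8 * (n * u)))
    (hW_low : v * (n - 4 * (n * u)) < W) (hT : |T| < √(v * n * (2 * L + 2))) :
    |√((W - T ^ 2 / n) / (n - 1)) - √v| ≤ 8 * √v * u := by
  have hn1 : 0 < n - 1 := by linarith
  have hT2 : T ^ 2 / n < v * (2 * L + 2) := by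
    rw [lt_sqrt (abs_nonneg T), sq_abs] at hT
    rw [div_lt_iff₀ (by linarith)]
    linarith
  rw [mul_right_comm, mul_comm]
  refine abs_sqrt_sub_sqrt_le (by positivity) ?_ fun h8 ↦ ?_
  · have hgap : n + 8 * (n * u) ≤ (n - 1) * (1 + 8 * u) ^ 2 := by nlinarith
    rw [div_le_iff₀ hn1]
    nlinarith [div_nonneg (sq_nonneg T) (by linarith : (0 : ℝ) ≤ n)]
  · have hnu8 : 8 * L ≤ n * u := by nlinarith
    have hgap : (1 - 8 * u) ^ 2 * (n - 1) ≤ n - 4 * (n * u) - (2 * L + 2) := by nlinarith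
    rw [le_div_iff₀ hn1]
    nlinarith

lemma integral_exp_mul_sq_gaussianReal {v : ℝ≥0} {t : ℝ} (ht : 2 * t * v < 1) :
    ∫ x, exp (t * x ^ 2) ∂gaussianReal 0 v = (√(1 - 2 * t * v))⁻¹ := by
  rcases eq_or_ne v 0 with rfl | hv
  · simp [gaussianReal_zero_var]
  have hv0 : (0 : ℝ) < v := by positivity
  have hb : 0 < (2 * (v : ℝ))⁻¹ - t := by
    rw [show (2 * (v : ℝ))⁻¹ - t = (1 - 2 * t * v) / (2 * v) by field_simp]
    exact div_pos (by linarith) (by positivity)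
  calc ∫ x, exp (t * x ^ 2) ∂gaussianReal 0 v
      = ∫ x, (√(2 * π * v))⁻¹ * exp (-((2 * (v : ℝ))⁻¹ - t) * x ^ 2) := by
        rw [integral_gaussianReal_eq_integral_smul hv]
        congr 1 with x
        rw [gaussianPDFReal, smul_eq_mul, mul_assoc, ← exp_add]
        congr 2
        field_simp
        ring
    _ = (√(2 * π * v))⁻¹ * √(π / ((2 * (v : ℝ))⁻¹ - t)) := by
        rw [integral_const_mul, integral_gaussian]
    _ = (√(1 - 2 * t * v))⁻¹ := by
        rw [← sqrt_inv, ← sqrt_mul (by positivity), ← sqrt_inv]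
        congr 1
        field_simp

section Probability

variable {Ω : Type*} {m : MeasurableSpace Ω} {P : Measure Ω} {v : ℝ≥0}

lemma ofReal_one_sub_le_of_subset [IsProbabilityMeasure P] {G S : Set Ω} (hS : G ⊆ S) {ε : ℝ}
    (hG : P.real Gᶜ ≤ ε) : ENNReal.ofReal (1 - ε) ≤ P S := by
  have hcover : 1 ≤ P.real G + P.real Gᶜ := by
    simpa [Set.union_compl_self] using measureReal_union_le (μ := P) G Gᶜ
  rw [← ofReal_measureReal]
  exact ENNReal.ofReal_le_ofReal (by linarith [measureReal_mono (μ := P) hS])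

lemma map_sub_const_eq_gaussianReal {X : Ω → ℝ} (hX : Measurable X) {μ : ℝ}
    (hlaw : P.map X = gaussianReal μ v) : P.map (fun ω ↦ X ω - μ) = gaussianReal 0 v := by
  change P.map ((· - μ) ∘ X) = _
  rw [← Measure.map_map (measurable_sub_const μ) hX, hlaw, gaussianReal_map_sub_const, sub_self]

lemma mgf_sq_of_map_eq_gaussianReal {X : Ω → ℝ} (hX : AEMeasurable X P)
    (hlaw : P.map X = gaussianReal 0 v) {t : ℝ} (ht : 2 * t * v < 1) :
    mgf (fun ω ↦ X ω ^ 2) P t = (√(1 - 2 * t * v))⁻¹ := by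
  rw [← integral_exp_mul_sq_gaussianReal ht, ← hlaw, integral_map hX (by fun_prop)]
  rfl

lemma hasSubgaussianMGF_of_map_eq_gaussianReal {X : Ω → ℝ} (hX : AEMeasurable X P)
    (hlaw : P.map X = gaussianReal 0 v) : HasSubgaussianMGF X v P := by
  rw [← HasSubgaussianMGF.id_map_iff hX, hlaw]
  exact ⟨integrable_exp_mul_gaussianReal, fun t ↦ by simp [mgf_id_gaussianReal]⟩

variable {ι : Type*} [Fintype ι] {X : ι → Ω → ℝ}

lemma mgf_sum_sq_of_iIndepFun (hmeas : ∀ i, Measurable (X i)) (hindep : iIndepFun X P)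
    (hlaw : ∀ i, P.map (X i) = gaussianReal 0 v) {t : ℝ} (ht : 2 * t * v < 1) :
    mgf (fun ω ↦ ∑ i, X i ω ^ 2) P t = (√(1 - 2 * t * v))⁻¹ ^ Fintype.card ι := by
  have hsq : iIndepFun (fun i ω ↦ X i ω ^ 2) P :=
    hindep.comp (fun _ x ↦ x ^ 2) (fun _ ↦ by fun_prop)
  have hsum := hsq.mgf_sum (t := t) (fun i ↦ (hmeas i).pow_const 2) univ
  simp only [sum_fn] at hsum
  rw [hsum, prod_congr rfl fun i _ ↦
      mgf_sq_of_map_eq_gaussianReal (hmeas i).aemeasurable (hlaw i) ht,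
    prod_const, card_univ]

variable [IsProbabilityMeasure P]

lemma measureReal_sum_sq_ge_le (hv : v ≠ 0) (hmeas : ∀ i, Measurable (X i))
    (hindep : iIndepFun X P) (hlaw : ∀ i, P.map (X i) = gaussianReal 0 v)
    {s : ℝ} (hs0 : 0 ≤ s) (hs : s ≤ 1 / 4) (a : ℝ) :
    P.real {ω | v * (Fintype.card ι + a) ≤ ∑ i, X i ω ^ 2}
      ≤ exp (-(s * a) + 4 * Fintype.card ι * s ^ 2) := by
  set n := Fintype.card ι
  have hv0 : (0 : ℝ) < v := by positivity
  have hmgf := mgf_sum_sq_of_iIndepFun hmeas hindep hlaw (t := s / v) (by field_simp; linarith)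
  rw [show 2 * (s / v) * v = 2 * s by field_simp] at hmgf
  have hint : Integrable (fun ω ↦ exp (s / v * ∑ i, X i ω ^ 2)) P := by
    rw [← mgf_pos_iff, hmgf]
    have : 0 < 1 - 2 * s := by linarith
    positivity
  calc P.real {ω | v * (n + a) ≤ ∑ i, X i ω ^ 2}
      ≤ exp (-(s / v) * (v * (n + a))) * mgf (fun ω ↦ ∑ i, X i ω ^ 2) P (s / v) :=
        measure_ge_le_exp_mul_mgf _ (by positivity) hint
    _ = exp (-(s * (n + a))) * (√(1 - 2 * s))⁻¹ ^ n := by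
        rw [hmgf]
        congr 2
        field_simp
    _ ≤ exp (-(s * (n + a))) * exp (s + 4 * s ^ 2) ^ n := by
        gcongr
        exact inv_sqrt_one_sub_two_mul_le_exp hs
    _ = exp (-(s * a) + 4 * n * s ^ 2) := by
        rw [← exp_nat_mul, ← exp_add]
        ring_nf

lemma measureReal_sum_sq_le_le (hv : v ≠ 0) (hmeas : ∀ i, Measurable (X i))
    (hindep : iIndepFun X P) (hlaw : ∀ i, P.map (X i) = gaussianReal 0 v)
    {s : ℝ} (hs : 0 ≤ s) (a : ℝ) :
    P.real {ω | ∑ i, X i ω ^ 2 ≤ v * (Fintype.card ι - a)}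
      ≤ exp (-(s * a) + 2 * Fintype.card ι * s ^ 2) := by
  set n := Fintype.card ι
  have hv0 : (0 : ℝ) < v := by positivity
  have hmgf := mgf_sum_sq_of_iIndepFun hmeas hindep hlaw (t := -(s / v))
    (by field_simp; linarith)
  rw [show 2 * (-(s / v)) * v = -(2 * s) by field_simp, sub_neg_eq_add] at hmgf
  have hint : Integrable (fun ω ↦ exp (-(s / v) * ∑ i, X i ω ^ 2)) P := by
    rw [← mgf_pos_iff, hmgf]
    have : 0 < 1 + 2 * s := by linarith
    positivity
  calc P.real {ω | ∑ i, X i ω ^ 2 ≤ v * (n - a)}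
      ≤ exp (-(-(s / v)) * (v * (n - a))) * mgf (fun ω ↦ ∑ i, X i ω ^ 2) P (-(s / v)) :=
        measure_le_le_exp_mul_mgf _ (neg_nonpos.2 (by positivity)) hint
    _ = exp (s * (n - a)) * (√(1 + 2 * s))⁻¹ ^ n := by
        rw [hmgf]
        congr 2
        field_simp
    _ ≤ exp (s * (n - a)) * exp (-s + 2 * s ^ 2) ^ n := by
        gcongr
        exact inv_sqrt_one_add_two_mul_le_exp hs
    _ = exp (-(s * a) + 2 * n * s ^ 2) := by
        rw [← exp_nat_mul, ← exp_add]
        ring_nf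

lemma measureReal_abs_sum_ge_le_of_iIndepFun (hindep : iIndepFun X P) {c : ℝ≥0}
    (hsub : ∀ i, HasSubgaussianMGF (X i) c P) {r : ℝ} (hr : 0 ≤ r) :
    P.real {ω | r ≤ |∑ i, X i ω|} ≤ 2 * exp (-r ^ 2 / (2 * (Fintype.card ι * c))) := by
  have hneg : iIndepFun (fun i ↦ -X i) P := hindep.comp (fun _ x ↦ -x) (fun _ ↦ measurable_neg)
  have hcard : ((∑ _ : ι, c : ℝ≥0) : ℝ) = Fintype.card ι * c := by simp
  have hup := HasSubgaussianMGF.measure_sum_ge_le_of_iIndepFun hindep (fun i _ ↦ hsub i)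
    (s := univ) hr
  have hlow := HasSubgaussianMGF.measure_sum_ge_le_of_iIndepFun hneg (fun i _ ↦ (hsub i).neg)
    (s := univ) hr
  rw [hcard] at hup hlow
  calc P.real {ω | r ≤ |∑ i, X i ω|}
      ≤ P.real ({ω | r ≤ ∑ i, X i ω} ∪ {ω | r ≤ ∑ i, (-X i) ω}) := by
        refine measureReal_mono fun ω hω ↦ ?_
        simp only [Set.mem_ofPred_eq, Set.mem_union, Pi.neg_apply, sum_neg_distrib] at hω ⊢
        exact (le_abs'.mp hω).symm.imp id (by intro h; linarith)
    _ ≤ _ := (measureReal_union_le _ _).trans (by linarith)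

lemma measureReal_compl_sum_sq_sum_bounds_le (hv : v ≠ 0) (hmeas : ∀ i, Measurable (X i))
    (hindep : iIndepFun X P) (hlaw : ∀ i, P.map (X i) = gaussianReal 0 v)
    {u L : ℝ} (hu : 0 < u) (hu1 : u ≤ 1) (hL : 4 / 3 ≤ L) (hnu : Fintype.card ι * u ^ 2 = L) :
    P.real {ω | ∑ i, X i ω ^ 2 < v * (Fintype.card ι + 8 * (Fintype.card ι * u)) ∧
        v * (Fintype.card ι - 4 * (Fintype.card ι * u)) < ∑ i, X i ω ^ 2 ∧
        |∑ i, X i ω| < √(v * Fintype.card ι * (2 * L + 2))}ᶜ ≤ 4 * exp (-(L + 1)) := by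
  set n := Fintype.card ι
  have hv0 : (0 : ℝ) < v := by positivity
  have hn : (n : ℝ) ≠ 0 := by rintro h; simp [h] at hnu; linarith
  -- The Chernoff parameters `u / 4` and `u` give exponents `-7L/4` and `-2L`, both `≤ -(L + 1)`.
  have hupper : P.real {ω | v * (n + 8 * (n * u)) ≤ ∑ i, X i ω ^ 2} ≤ exp (-(L + 1)) :=
    (measureReal_sum_sq_ge_le hv hmeas hindep hlaw (s := u / 4) (by positivity) (by linarith)
      _).trans (exp_le_exp.2 (by nlinarith))
  have hlower : P.real {ω | ∑ i, X i ω ^ 2 ≤ v * (n - 4 * (n * u))} ≤ exp (-(L + 1)) :=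
    (measureReal_sum_sq_le_le hv hmeas hindep hlaw hu.le _).trans (exp_le_exp.2 (by nlinarith))
  have hsum : P.real {ω | √(v * n * (2 * L + 2)) ≤ |∑ i, X i ω|} ≤ 2 * exp (-(L + 1)) := by
    refine (measureReal_abs_sum_ge_le_of_iIndepFun hindep (fun i ↦
      hasSubgaussianMGF_of_map_eq_gaussianReal (hmeas i).aemeasurable (hlaw i))
      (sqrt_nonneg _)).trans_eq ?_
    change 2 * exp (-√(v * n * (2 * L + 2)) ^ 2 / (2 * (n * v))) = _
    rw [sq_sqrt (by positivity)]
    congr 2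
    field_simp
  calc _ ≤ P.real ({ω | v * (n + 8 * (n * u)) ≤ ∑ i, X i ω ^ 2} ∪
          {ω | ∑ i, X i ω ^ 2 ≤ v * (n - 4 * (n * u))} ∪
          {ω | √(v * n * (2 * L + 2)) ≤ |∑ i, X i ω|}) := by
        refine measureReal_mono fun ω hω ↦ ?_
        simpa only [Set.mem_compl_iff, Set.mem_ofPred_eq, Set.mem_union, not_and_or, not_lt,
          or_assoc] using hω
    _ ≤ P.real {ω | v * (n + 8 * (n * u)) ≤ ∑ i, X i ω ^ 2} +
          P.real {ω | ∑ i, X i ω ^ 2 ≤ v * (n - 4 * (n * u))} +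
          P.real {ω | √(v * n * (2 * L + 2)) ≤ |∑ i, X i ω|} :=
        (measureReal_union_le _ _).trans (add_le_add_left (measureReal_union_le _ _) _)
    _ ≤ 4 * exp (-(L + 1)) := by linarith

end Probability

/-- Concentration of the sample standard deviation of i.i.d. Gaussians: for
`δ ∈ (0,1)` and `d ≥ max{2, log(6/δ)}`, with probability at least `1 - δ/3`,
`|s - σ| ≤ 8σ·√(log(6/δ)/d)`. -/
theorem sample_std_concentration
    {Ω : Type*} [MeasureSpace Ω] [IsProbabilityMeasure (ℙ : Measure Ω)]
    (d : ℕ) (μ : ℝ) (v : NNReal) (hv : v ≠ 0)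
    (X : Fin d → Ω → ℝ) (hmeas : ∀ i, Measurable (X i))
    (hindep : iIndepFun X ℙ)
    (hlaw : ∀ i, Measure.map (X i) ℙ = gaussianReal μ v)
    (δ : ℝ) (hδ : δ ∈ Set.Ioo (0:ℝ) 1)
    (hd2 : 2 ≤ d) (hdlog : Real.log (6 / δ) ≤ d) :
    ENNReal.ofReal (1 - δ / 3) ≤
      ℙ {ω : Ω |
        |Real.sqrt ((∑ i, (X i ω - (∑ j, X j ω) / d)^2) / ((d : ℝ) - 1)) - Real.sqrt v|
          ≤ 8 * Real.sqrt v * Real.sqrt (Real.log (6 / δ) / d)} := by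
  obtain ⟨hδ0, hδ1⟩ := hδ
  have hd : (2 : ℝ) ≤ d := by exact_mod_cast hd2
  have hL := four_thirds_le_log_six_div hδ0 hδ1.le
  set L := log (6 / δ)
  set u := √(L / d)
  have hu : 0 < u := sqrt_pos.2 (by positivity)
  have hdu : (d : ℝ) * u ^ 2 = L := by rw [sq_sqrt (by positivity)]; field_simp
  have hgood := measureReal_compl_sum_sq_sum_bounds_le hv (fun i ↦ (hmeas i).sub_const μ)
    (hindep.comp (fun _ x ↦ x - μ) fun _ ↦ measurable_sub_const μ)
    (fun i ↦ map_sub_const_eq_gaussianReal (hmeas i) (hlaw i)) hu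
    (sqrt_le_one.2 ((div_le_one (by linarith)).2 hdlog)) hL (by simpa using hdu)
  simp only [Fintype.card_fin] at hgood
  refine ofReal_one_sub_le_of_subset (fun ω hω ↦ ?_)
    (hgood.trans (by linarith [exp_neg_log_six_div_add_one_le hδ0]))
  obtain ⟨hW_up, hW_low, hT⟩ := hω
  have hvar := sum_sub_mean_sq_eq (fun i ↦ X i ω) μ
  simp only [Fintype.card_fin] at hvar
  rw [Set.mem_ofPred_eq, hvar]
  exact abs_sqrt_sample_var_sub_sqrt_le hd v.2 hu (by linarith) hdu hW_up hW_low hT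
end
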